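/- Let ε ∈ (0,1], μ ∈ ℝ, τ > 0 and set d⁺(τ) = i e^{-iμ²τ} ∫₀^τ e^{i(μ² + 1/ε²)θ} θ dθ. Then |d⁺(τ)| ≤ ε²(2ε² + τ). -/

import Mathlib

/-! Integrating by parts once, `∫₀^τ e^{iaθ} θ dθ = e^{iaτ}(τ/(ia) + 1/a²) - 1/a²` with
`a = μ² + 1/ε²`, so its modulus is at most `τ/a + 2/a²`; and `1/a ≤ ε²` because `ε²a = 1 + ε²μ²`. -/

open Complex

theorem integral_exp_mul_mul_ofReal {c : ℂ} (hc : c ≠ 0) (τ : ℝ) :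
    ∫ θ : ℝ in (0)..τ, exp (c * θ) * θ = exp (c * τ) * (τ / c - 1 / c ^ 2) + 1 / c ^ 2 := by
  have hderiv : ∀ θ : ℝ, HasDerivAt (fun x : ℝ => exp (c * x) * ((x : ℂ) / c - 1 / c ^ 2))
      (exp (c * θ) * θ) θ := by
    intro θ
    convert ((((hasDerivAt_id (θ : ℂ)).const_mul c).cexp.mul
      (((hasDerivAt_id (θ : ℂ)).div_const c).sub_const (1 / c ^ 2)))).comp_ofReal using 1
    · rfl
    simp only [id_eq]
    field_simp
    ring
  rw [intervalIntegral.integral_eq_sub_of_hasDerivAt (fun θ _ => hderiv θ)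
    (by apply Continuous.intervalIntegrable; fun_prop)]
  simp only [ofReal_zero, mul_zero, exp_zero, zero_div, zero_sub, one_mul, sub_neg_eq_add]

theorem norm_integral_exp_I_mul_mul_ofReal_le {a τ : ℝ} (ha : 0 < a) (hτ : 0 ≤ τ) :
    ‖∫ θ : ℝ in (0)..τ, exp (I * a * θ) * θ‖ ≤ τ / a + 2 / a ^ 2 := by
  have hc : I * (a : ℂ) ≠ 0 := mul_ne_zero I_ne_zero (ofReal_ne_zero.mpr ha.ne')
  have hnorm_c : ‖I * (a : ℂ)‖ = a := by simp [abs_of_pos ha]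
  have hnorm_exp : ‖exp (I * a * τ)‖ = 1 := by
    rw [show I * a * τ = ((a * τ : ℝ) : ℂ) * I by push_cast; ring, norm_exp_ofReal_mul_I]
  rw [integral_exp_mul_mul_ofReal hc]
  calc ‖exp (I * a * τ) * (τ / (I * a) - 1 / (I * a) ^ 2) + 1 / (I * a) ^ 2‖
      ≤ ‖exp (I * a * τ)‖ * (‖(τ : ℂ) / (I * a)‖ + ‖1 / (I * a) ^ 2‖) + ‖1 / (I * a) ^ 2‖ := by
        grw [norm_add_le, norm_mul, norm_sub_le]
    _ = τ / a + 2 / a ^ 2 := by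
        rw [hnorm_exp, norm_div, norm_div, norm_pow, hnorm_c, norm_one, norm_real,
          Real.norm_of_nonneg hτ]
        ring

theorem one_div_sq_add_one_div_sq_le {ε : ℝ} (hε : 0 < ε) (μ : ℝ) :
    1 / (μ ^ 2 + 1 / ε ^ 2) ≤ ε ^ 2 := by
  rw [div_le_iff₀ (by positivity), mul_add, mul_one_div_cancel (by positivity)]
  nlinarith [sq_nonneg (ε * μ)]

theorem d_plus_bound_general (ε : ℝ) (hε : 0 < ε) (μ τ : ℝ) (hτ : 0 < τ) :
    ‖Complex.I * Complex.exp (-Complex.I * μ ^ 2 * τ)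
        * ∫ θ : ℝ in (0)..τ, Complex.exp (Complex.I * (μ ^ 2 + 1 / ε ^ 2) * θ) * θ‖
      ≤ ε ^ 2 * (2 * ε ^ 2 + τ) := by
  have hphase : ‖I * exp (-I * μ ^ 2 * τ)‖ = 1 := by
    rw [norm_mul, norm_I, one_mul,
      show -I * (μ : ℂ) ^ 2 * τ = ((-(μ ^ 2 * τ) : ℝ) : ℂ) * I by push_cast; ring,
      norm_exp_ofReal_mul_I]
  have hinv : 1 / (μ ^ 2 + 1 / ε ^ 2) ≤ ε ^ 2 := one_div_sq_add_one_div_sq_le hε μ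
  have ha : 0 < μ ^ 2 + 1 / ε ^ 2 := by positivity
  have hbound := norm_integral_exp_I_mul_mul_ofReal_le ha hτ.le
  push_cast at hbound
  rw [norm_mul, hphase, one_mul]
  refine hbound.trans ?_
  generalize μ ^ 2 + 1 / ε ^ 2 = a at ha hinv ⊢
  calc τ / a + 2 / a ^ 2 = τ * (1 / a) + 2 * (1 / a) ^ 2 := by ring
    _ ≤ τ * ε ^ 2 + 2 * (ε ^ 2) ^ 2 := by gcongr
    _ = ε ^ 2 * (2 * ε ^ 2 + τ) := by ring

theorem d_plus_bound (ε : ℝ) (hε : 0 < ε) (hε1 : ε ≤ 1) (μ τ : ℝ) (hτ : 0 < τ) :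
    ‖Complex.I * Complex.exp (-Complex.I * μ ^ 2 * τ)
        * ∫ θ : ℝ in (0)..τ, Complex.exp (Complex.I * (μ ^ 2 + 1 / ε ^ 2) * θ) * θ‖
      ≤ ε ^ 2 * (2 * ε ^ 2 + τ) :=
  d_plus_bound_general ε hε μ τ hτ
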